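/- Let λ ∈ ∂𝔻 be an irrational rotation, let φ ∈ H^∞(𝔻), and let T = R_λ φ(B) on H²(𝔻). Suppose there exists a sequence (n_k) of positive integers such that the sets C₀ = {z ∈ 𝔻 : Ψ_{n_k}(z) → 0} and C₁ = {z ∈ 𝔻 : Ω_{n_k}(z) → ∞} both have an accumulation point in 𝔻. Then T is hypercyclic on H²(𝔻). -/

import Mathlib

open Complex Metric Filter Topology ComplexConjugate

noncomputable section

/-- The Hardy space `H²(𝔻)`, modeled via Taylor coefficients as the sequence space `ℓ²`:
an analytic function `f(z) = Σ aₙ zⁿ` on the unit disk with `Σ |aₙ|² < ∞` is identified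
with its coefficient sequence. -/
abbrev H2 := lp (fun _ : ℕ => ℂ) 2

/-- The analytic function on the unit disk represented by an element of `H²`. -/
def H2.toFun (f : H2) (z : ℂ) : ℂ := ∑' n : ℕ, f n * z ^ n

/-- `B` is the backward shift `(Bf)(z) = (f(z) - f(0))/z`, i.e. on Taylor coefficients
`(Bf)ₙ = f_{n+1}`. -/
def IsBackwardShift (B : H2 →L[ℂ] H2) : Prop :=
  ∀ (f : H2) (n : ℕ), B f n = f (n + 1)

/-- `R` is the dilation operator `(R_λ f)(z) = f(λ z)`, i.e. on Taylor coefficients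
`(R_λ f)ₙ = λⁿ fₙ`. -/
def IsDilation (lam : ℂ) (R : H2 →L[ℂ] H2) : Prop :=
  ∀ (f : H2) (n : ℕ), R f n = lam ^ n * f n

/-- `φ ∈ H^∞(𝔻)`: a bounded analytic function on the open unit disk. -/
def InHinf (φ : ℂ → ℂ) : Prop :=
  DifferentiableOn ℂ φ (ball (0:ℂ) 1) ∧ ∃ M : ℝ, ∀ z ∈ ball (0:ℂ) 1, ‖φ z‖ ≤ M

/-- `Φ = φ(B)`, the coanalytic Toeplitz operator `M_{φ̄}⋆` with symbol `φ`: there is a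
Taylor coefficient sequence `c` for `φ` on the disk such that
`(Φ f)ₙ = Σ_k c_k f_{n+k}` (equivalently `Φ = Σ_k c_k B^k`). -/
def IsCoToeplitz (φ : ℂ → ℂ) (Φ : H2 →L[ℂ] H2) : Prop :=
  ∃ c : ℕ → ℂ,
    (∀ z ∈ ball (0:ℂ) 1, HasSum (fun k => c k * z ^ k) (φ z)) ∧
    (∀ (f : H2) (n : ℕ), HasSum (fun k => c k * f (n + k)) (Φ f n))

/-- An operator `T` is hypercyclic if some vector has dense orbit `{Tⁿ x : n ∈ ℕ}`. -/
def Hypercyclic (T : H2 →L[ℂ] H2) : Prop :=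
  ∃ x : H2, Dense (Set.range fun n : ℕ => (T ^ n) x)

/-- An operator `T` is supercyclic if for some vector `x` the set of scalar multiples
`{μ Tⁿ x : μ ∈ ℂ, n ∈ ℕ}` is dense. -/
def Supercyclic (T : H2 →L[ℂ] H2) : Prop :=
  ∃ x : H2, Dense {y : H2 | ∃ (μ : ℂ) (n : ℕ), y = μ • (T ^ n) x}

/-- `φ̄(z) = conj (φ (conj z))`. -/
def conjSymb (φ : ℂ → ℂ) (z : ℂ) : ℂ := conj (φ (conj z))

/-- `λ` is an irrational rotation: `|λ| = 1` and `λ` is not a root of unity. -/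
def IsIrrationalRotation (lam : ℂ) : Prop :=
  ‖lam‖ = 1 ∧ ∀ n : ℕ, 0 < n → lam ^ n ≠ 1

/-- `Ψ_n(z) = φ̄(z)·φ̄(αz)⋯φ̄(α^{n-1}z)` where `α = conj λ`. -/
def psiProd (φ : ℂ → ℂ) (lam : ℂ) (n : ℕ) (z : ℂ) : ℂ :=
  ∏ j ∈ Finset.range n, conjSymb φ ((conj lam) ^ j * z)

/-- `Ω_n(z) = φ̄(ωz)·φ̄(ω²z)⋯φ̄(ωⁿz)` where `ω = 1/conj λ`. -/
def omegaProd (φ : ℂ → ℂ) (lam : ℂ) (n : ℕ) (z : ℂ) : ℂ :=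
  ∏ j ∈ Finset.range n, conjSymb φ (((conj lam)⁻¹) ^ (j + 1) * z)

lemma memℓp_geom {a : ℂ} (ha : ‖a‖ < 1) : Memℓp (fun n : ℕ => (conj a) ^ n) 2 := by
  apply memℓp_gen
  have hs : Summable fun n : ℕ => (‖a‖ ^ 2) ^ n :=
    summable_geometric_of_lt_one (by positivity) (by nlinarith [norm_nonneg a])
  refine hs.congr fun n => ?_
  rw [norm_pow]
  simp only [RCLike.norm_conj]
  rw [ENNReal.toReal_ofNat, Real.rpow_two]
  ring

/-- The reproducing kernel `k_a(z) = 1/(1 - conj(a) z) = Σ (conj a)ⁿ zⁿ` of `H²(𝔻)`,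
as an element of `H²` (junk value `0` if `a` is outside the unit disk). -/
def kernelVec (a : ℂ) : H2 :=
  if ha : ‖a‖ < 1 then ⟨fun n => (conj a) ^ n, memℓp_geom ha⟩ else 0

/-- `T` satisfies the Hypercyclicity Criterion for the sequence `(n_k)`. -/
def SatisfiesHCCriterion (T : H2 →L[ℂ] H2) (nk : ℕ → ℕ) : Prop :=
  ∃ (X₀ Y₀ : Set H2) (S : ℕ → H2 → H2),
    Dense X₀ ∧ Dense Y₀ ∧
    (∀ x ∈ X₀, Tendsto (fun k => (T ^ nk k) x) atTop (𝓝 0)) ∧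
    (∀ y ∈ Y₀, Tendsto (fun k => S k y) atTop (𝓝 0)) ∧
    (∀ y ∈ Y₀, Tendsto (fun k => (T ^ nk k) (S k y)) atTop (𝓝 y))

/-- A family `F` of functions is normal at `z₀`: on some open neighborhood of `z₀`,
every (sub)sequence of the family has a locally uniformly convergent subsequence. -/
def NormalAt (F : ℕ → ℂ → ℂ) (z₀ : ℂ) : Prop :=
  ∃ U : Set ℂ, IsOpen U ∧ z₀ ∈ U ∧
    ∀ g : ℕ → ℕ, StrictMono g →
      ∃ (h : ℕ → ℕ) (f : ℂ → ℂ), StrictMono h ∧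
        TendstoLocallyUniformlyOn (fun j => F (g (h j))) f atTop U

/-- The family `{F n : n ≥ 1}` is uniformly bounded on compact subsets of the unit disk. -/
def UnifBddOnCompacts (F : ℕ → ℂ → ℂ) : Prop :=
  ∀ K : Set ℂ, K ⊆ ball (0:ℂ) 1 → IsCompact K →
    ∃ M : ℝ, ∀ n : ℕ, 1 ≤ n → ∀ z ∈ K, ‖F n z‖ ≤ M


/-!
The reproducing kernels `k_a` of `H²` are eigenvectors of `φ(B)` (eigenvalue `φ(conj a)`) and are
rotated by `R_λ`, so `Tⁿ k_a = conj (Ψ_n(a)) • k_{ᾱⁿ a}` with `‖k_{ᾱⁿ a}‖ = ‖k_a‖`. Hence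
`T^{n_k} → 0` on the span of `{k_a : a ∈ C₀}`; and since `Ψ_n(ωⁿ b) = Ω_n(b)`, for `b ∈ C₁` the
vectors `conj (Ω_{n_k}(b))⁻¹ • k_{ω^{n_k} b}` tend to `0` while `T^{n_k}` maps them to `k_b`.
Both spans are dense: a function in `H²` orthogonal to `k_a` vanishes at `a`, and a set with an
accumulation point in the disk is a uniqueness set for analytic functions. The Hypercyclicity
Criterion, proved through Birkhoff's transitivity theorem, concludes.
-/

open scoped InnerProductSpace

theorem HilbertBasis.separableSpace {ι 𝕜 E : Type*} [Countable ι] [RCLike 𝕜]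
    [NormedAddCommGroup E] [InnerProductSpace 𝕜 E] (b : HilbertBasis ι 𝕜 E) :
    TopologicalSpace.SeparableSpace E := by
  rw [← TopologicalSpace.isSeparable_univ_iff, ← Submodule.top_coe (R := 𝕜), ← b.dense_span,
    Submodule.topologicalClosure_coe]
  exact (Set.countable_range b).isSeparable.span.closure

instance : TopologicalSpace.SeparableSpace H2 :=
  (default : HilbertBasis ℕ ℂ H2).separableSpace

theorem exists_dense_orbit_of_transitive {X : Type*} [TopologicalSpace X] [Nonempty X]
    [BaireSpace X] [SecondCountableTopology X] {f : X → X} (hf : Continuous f)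
    (htrans : ∀ U V : Set X, IsOpen U → U.Nonempty → IsOpen V → V.Nonempty →
      ∃ n, ∃ u ∈ U, f^[n] u ∈ V) :
    ∃ x, Dense (Set.range fun n => f^[n] x) := by
  obtain ⟨b, hbc, hb0, hb⟩ := TopologicalSpace.exists_countable_basis X
  have hvisits : ∀ V ∈ b, IsOpen (⋃ n, f^[n] ⁻¹' V) ∧ Dense (⋃ n, f^[n] ⁻¹' V) := by
    intro V hV
    refine ⟨isOpen_iUnion fun n => (hb.isOpen hV).preimage (hf.iterate n), ?_⟩
    refine dense_iff_inter_open.mpr fun U hU hUne => ?_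
    have hVne : V.Nonempty := Set.nonempty_iff_ne_empty.mpr (ne_of_mem_of_not_mem hV hb0)
    obtain ⟨n, u, hu, hnu⟩ := htrans U V hU hUne (hb.isOpen hV) hVne
    exact ⟨u, hu, Set.mem_iUnion.mpr ⟨n, hnu⟩⟩
  obtain ⟨x, hx⟩ := (dense_biInter_of_isOpen (fun V hV => (hvisits V hV).1) hbc
    fun V hV => (hvisits V hV).2).nonempty
  refine ⟨x, hb.dense_iff.mpr fun V hV hVne => ?_⟩
  obtain ⟨n, hn⟩ := Set.mem_iUnion.mp (Set.mem_iInter₂.mp hx V hV)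
  exact ⟨f^[n] x, hn, n, rfl⟩

section AsymptoticSubmodules

variable {ι R E F : Type*} [Semiring R] [AddCommMonoid E] [TopologicalSpace E] [Module R E]
  [AddCommMonoid F] [TopologicalSpace F] [Module R F] [ContinuousAdd F] [ContinuousConstSMul R F]

def tendstoZeroSubmodule (L : ι → E →L[R] F) (l : Filter ι) : Submodule R E where
  carrier := {x | Tendsto (fun i => L i x) l (𝓝 0)}
  zero_mem' := by simpa using tendsto_const_nhds
  add_mem' {x y} hx hy := by simpa using hx.add hy
  smul_mem' c x hx := by simpa using hx.const_smul c

variable [ContinuousAdd E] [ContinuousConstSMul R E]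

def approxRangeSubmodule (L : ι → E →L[R] F) (l : Filter ι) : Submodule R F where
  carrier := {y | ∃ w : ι → E, Tendsto w l (𝓝 0) ∧ Tendsto (fun i => L i (w i)) l (𝓝 y)}
  zero_mem' := ⟨0, tendsto_const_nhds, by simpa using tendsto_const_nhds⟩
  add_mem' := by
    rintro y y' ⟨w, hw, hLw⟩ ⟨w', hw', hLw'⟩
    exact ⟨fun i => w i + w' i, by simpa using hw.add hw', by simpa using hLw.add hLw'⟩
  smul_mem' := by
    rintro c y ⟨w, hw, hLw⟩
    exact ⟨fun i => c • w i, by simpa using hw.const_smul c, by simpa using hLw.const_smul c⟩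

end AsymptoticSubmodules

section NormedSpace

variable {ι 𝕜 E F : Type*} [NormedField 𝕜] [NormedAddCommGroup E] [NormedSpace 𝕜 E]
  [NormedAddCommGroup F] [NormedSpace 𝕜 F] {L : ι → E →L[𝕜] F} {l : Filter ι} {c : ι → 𝕜}

theorem mem_tendstoZeroSubmodule_of_eq_smul {x : E} {v : ι → F}
    (hx : ∀ i, L i x = c i • v i) (hc : Tendsto c l (𝓝 0))
    (hv : IsBoundedUnder (· ≤ ·) l (norm ∘ v)) : x ∈ tendstoZeroSubmodule L l := by
  simpa [tendstoZeroSubmodule, hx] using hc.zero_smul_isBoundedUnder_le hv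

theorem mem_approxRangeSubmodule_of_eq_smul {y : F} {v : ι → E}
    (hy : ∀ i, L i (v i) = c i • y) (hc : Tendsto (fun i => ‖c i‖) l atTop)
    (hv : IsBoundedUnder (· ≤ ·) l (norm ∘ v)) : y ∈ approxRangeSubmodule L l := by
  have hc_inv : Tendsto (fun i => (c i)⁻¹) l (𝓝 0) := by
    simpa [tendsto_zero_iff_norm_tendsto_zero] using hc.inv_tendsto_atTop
  refine ⟨fun i => (c i)⁻¹ • v i, hc_inv.zero_smul_isBoundedUnder_le hv,
    tendsto_const_nhds.congr' ?_⟩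
  filter_upwards [hc.eventually_gt_atTop 0] with i hi
  rw [map_smul, hy, inv_smul_smul₀ (norm_pos_iff.mp hi)]

end NormedSpace

theorem SatisfiesHCCriterion.of_dense {T : H2 →L[ℂ] H2} {nk : ℕ → ℕ}
    (hX : Dense (tendstoZeroSubmodule (fun k => T ^ nk k) atTop : Set H2))
    (hY : Dense (approxRangeSubmodule (fun k => T ^ nk k) atTop : Set H2)) :
    SatisfiesHCCriterion T nk := by
  choose! S hS0 hTS using fun y (hy : y ∈ approxRangeSubmodule (fun k => T ^ nk k) atTop) => hy
  exact ⟨_, _, fun k y => S y k, hX, hY, fun _ hx => hx, hS0, hTS⟩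

theorem SatisfiesHCCriterion.hypercyclic {T : H2 →L[ℂ] H2} {nk : ℕ → ℕ}
    (h : SatisfiesHCCriterion T nk) : Hypercyclic T := by
  obtain ⟨X₀, Y₀, S, hX, hY, hTx, hS, hTS⟩ := h
  simp only [Hypercyclic, FunLike.coe_pow_eq_iterate]
  refine exists_dense_orbit_of_transitive T.continuous fun U V hU hUne hV hVne => ?_
  obtain ⟨x, hx, hxU⟩ := hX.exists_mem_open hU hUne
  obtain ⟨y, hy, hyV⟩ := hY.exists_mem_open hV hVne
  have hxU' : ∀ᶠ k in atTop, x + S k y ∈ U := by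
    have hlim : Tendsto (fun k => x + S k y) atTop (𝓝 x) := by
      simpa using tendsto_const_nhds.add (hS y hy)
    exact hlim.eventually (hU.mem_nhds hxU)
  have hyV' : ∀ᶠ k in atTop, (T ^ nk k) (x + S k y) ∈ V := by
    have hlim := (hTx x hx).add (hTS y hy)
    simp only [zero_add, ← map_add] at hlim
    exact hlim.eventually (hV.mem_nhds hyV)
  obtain ⟨k, hkU, hkV⟩ := (hxU'.and hyV').exists
  exact ⟨nk k, _, hkU, by rwa [← FunLike.coe_pow_eq_iterate]⟩

theorem Metric.eball_one {X : Type*} [PseudoMetricSpace X] (x : X) : eball x 1 = ball x 1 := by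
  rw [← ENNReal.coe_one, Metric.eball_coe, NNReal.coe_one]

theorem norm_conj_mul_lt_one {lam a : ℂ} (hlam : ‖lam‖ ≤ 1) (ha : ‖a‖ < 1) :
    ‖conj lam * a‖ < 1 := by
  rw [norm_mul, RCLike.norm_conj]
  exact (mul_le_of_le_one_left (norm_nonneg a) hlam).trans_lt ha

theorem kernelVec_apply {a : ℂ} (ha : ‖a‖ < 1) (n : ℕ) : kernelVec a n = conj a ^ n := by
  simp only [kernelVec, dif_pos ha]

theorem norm_kernelVec_eq {a b : ℂ} (hab : ‖a‖ = ‖b‖) (ha : ‖a‖ < 1) :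
    ‖kernelVec a‖ = ‖kernelVec b‖ := by
  simp only [lp.norm_eq_tsum_rpow (p := 2) (by norm_num), kernelVec_apply ha,
    kernelVec_apply (hab ▸ ha), norm_pow, RCLike.norm_conj, hab]

theorem hasSum_inner_kernelVec {a : ℂ} (ha : ‖a‖ < 1) (f : H2) :
    HasSum (fun n => f n * a ^ n) ⟪kernelVec a, f⟫_ℂ := by
  simpa [kernelVec_apply ha, mul_comm] using lp.hasSum_inner (𝕜 := ℂ) (kernelVec a) f

theorem inner_kernelVec {a : ℂ} (ha : ‖a‖ < 1) (f : H2) : ⟪kernelVec a, f⟫_ℂ = H2.toFun f a :=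
  (hasSum_inner_kernelVec ha f).tsum_eq.symm

theorem H2.hasFPowerSeriesOnBall_toFun (f : H2) :
    HasFPowerSeriesOnBall (H2.toFun f) (FormalMultilinearSeries.ofScalars ℂ f) 0 1 where
  r_le := by
    refine ENNReal.le_of_forall_nnreal_lt fun r hr => ?_
    refine FormalMultilinearSeries.le_radius_of_bound _ ‖f‖ fun n => ?_
    rw [FormalMultilinearSeries.ofScalars_norm]
    have hrn : (r : ℝ) ^ n ≤ 1 := pow_le_one₀ r.2 (by exact_mod_cast hr.le)
    exact (mul_le_of_le_one_right (norm_nonneg _) hrn).trans (lp.norm_apply_le_norm two_ne_zero f n)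
  r_pos := one_pos
  hasSum {z} hz := by
    rw [Metric.eball_one, mem_ball_zero_iff] at hz
    simpa [FormalMultilinearSeries.ofScalars_apply_eq, inner_kernelVec hz, mul_comm]
      using hasSum_inner_kernelVec hz f

theorem H2.eq_zero_of_frequently_toFun_eq_zero {f : H2} {p : ℂ} (hp : p ∈ ball (0 : ℂ) 1)
    (hf : ∃ᶠ z in 𝓝[≠] p, H2.toFun f z = 0) : f = 0 := by
  have hF := H2.hasFPowerSeriesOnBall_toFun f
  have hzero : Set.EqOn (H2.toFun f) 0 (ball 0 1) :=
    (Metric.eball_one (0 : ℂ) ▸ hF.analyticOnNhd).eqOn_zero_of_preconnected_of_frequently_eq_zero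
      (convex_ball 0 1).isPreconnected hp hf
  have hcoeff := hF.hasFPowerSeriesAt.eq_zero_of_eventually
    (Filter.mem_of_superset (ball_mem_nhds 0 one_pos) hzero)
  exact Subtype.ext ((FormalMultilinearSeries.ofScalars_series_eq_zero ℂ).mp hcoeff)

theorem dense_span_kernelVec {A : Set ℂ} (hA : A ⊆ ball 0 1) {p : ℂ} (hp : p ∈ ball (0 : ℂ) 1)
    (hacc : AccPt p (𝓟 A)) : Dense (Submodule.span ℂ (kernelVec '' A) : Set H2) := by
  rw [Submodule.dense_iff_topologicalClosure_eq_top, ← Submodule.orthogonal_orthogonal_eq_closure,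
    Submodule.orthogonal_eq_top_iff, Submodule.eq_bot_iff]
  intro f hf
  refine H2.eq_zero_of_frequently_toFun_eq_zero hp ((accPt_iff_frequently_nhdsNE.mp hacc).mono ?_)
  intro a ha
  rw [← inner_kernelVec (mem_ball_zero_iff.mp (hA ha))]
  exact (Submodule.mem_orthogonal _ f).mp hf _ (Submodule.subset_span ⟨a, ha, rfl⟩)

theorem IsCoToeplitz.apply_kernelVec {φ : ℂ → ℂ} {Φ : H2 →L[ℂ] H2} (hΦ : IsCoToeplitz φ Φ)
    {a : ℂ} (ha : ‖a‖ < 1) : Φ (kernelVec a) = φ (conj a) • kernelVec a := by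
  obtain ⟨c, hφc, hΦc⟩ := hΦ
  ext n
  have hφ : HasSum (fun k => c k * conj a ^ k) (φ (conj a)) :=
    hφc _ (by simpa using ha)
  refine (hΦc _ n).unique ?_
  simpa [kernelVec_apply ha, pow_add, mul_left_comm, mul_comm] using hφ.mul_left (conj a ^ n)

theorem IsDilation.apply_kernelVec {lam : ℂ} {R : H2 →L[ℂ] H2} (hR : IsDilation lam R)
    (hlam : ‖lam‖ ≤ 1) {a : ℂ} (ha : ‖a‖ < 1) : R (kernelVec a) = kernelVec (conj lam * a) := by
  ext n
  rw [hR, kernelVec_apply ha, kernelVec_apply (norm_conj_mul_lt_one hlam ha), map_mul,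
    Complex.conj_conj, mul_pow]

theorem psiProd_succ (φ : ℂ → ℂ) (lam : ℂ) (n : ℕ) (a : ℂ) :
    psiProd φ lam (n + 1) a = conjSymb φ a * psiProd φ lam n (conj lam * a) := by
  simp only [psiProd, Finset.prod_range_succ', pow_succ, pow_zero, one_mul, mul_assoc]
  exact mul_comm _ _

theorem psiProd_inv_pow_mul (φ : ℂ → ℂ) {lam : ℂ} (hlam : lam ≠ 0) (n : ℕ) (b : ℂ) :
    psiProd φ lam n ((conj lam)⁻¹ ^ n * b) = omegaProd φ lam n b := by
  induction n with
  | zero => simp [psiProd, omegaProd]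
  | succ n ih =>
    rw [psiProd_succ, pow_succ', mul_assoc, mul_inv_cancel_left₀ (by simpa using hlam), ih,
      omegaProd, omegaProd, Finset.prod_range_succ, mul_comm, pow_succ', mul_assoc]

section Operator

variable {lam : ℂ} {φ : ℂ → ℂ} {R Φ T : H2 →L[ℂ] H2}

theorem apply_kernelVec_of_eq_comp (hlam : ‖lam‖ ≤ 1) (hR : IsDilation lam R)
    (hΦ : IsCoToeplitz φ Φ) (hT : T = R ∘L Φ) {a : ℂ} (ha : ‖a‖ < 1) :
    T (kernelVec a) = φ (conj a) • kernelVec (conj lam * a) := by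
  rw [hT, ContinuousLinearMap.comp_apply, hΦ.apply_kernelVec ha, map_smul,
    hR.apply_kernelVec hlam ha]

theorem pow_apply_kernelVec (hlam : ‖lam‖ ≤ 1) (hR : IsDilation lam R) (hΦ : IsCoToeplitz φ Φ)
    (hT : T = R ∘L Φ) (n : ℕ) {a : ℂ} (ha : ‖a‖ < 1) :
    (T ^ n) (kernelVec a) = conj (psiProd φ lam n a) • kernelVec (conj lam ^ n * a) := by
  induction n generalizing a with
  | zero => simp [psiProd]
  | succ n ih =>
    rw [pow_succ, mul_apply_eq_comp, apply_kernelVec_of_eq_comp hlam hR hΦ hT ha, map_smul,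
      ih (norm_conj_mul_lt_one hlam ha), smul_smul, psiProd_succ, map_mul, conjSymb,
      Complex.conj_conj, pow_succ, mul_assoc]

theorem kernelVec_mem_tendstoZeroSubmodule (hlam : ‖lam‖ = 1) (hR : IsDilation lam R)
    (hΦ : IsCoToeplitz φ Φ) (hT : T = R ∘L Φ) {nk : ℕ → ℕ} {a : ℂ} (ha : ‖a‖ < 1)
    (hΨ : Tendsto (fun k => psiProd φ lam (nk k) a) atTop (𝓝 0)) :
    kernelVec a ∈ tendstoZeroSubmodule (fun k => T ^ nk k) atTop := by
  have hnorm : ∀ n, ‖kernelVec (conj lam ^ n * a)‖ = ‖kernelVec a‖ := fun n =>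
    norm_kernelVec_eq (by simp [hlam]) (by simpa [hlam] using ha)
  refine mem_tendstoZeroSubmodule_of_eq_smul (fun k => pow_apply_kernelVec hlam.le hR hΦ hT _ ha)
    (by simpa [Function.comp_def] using (continuous_conj.tendsto 0).comp hΨ)
    (isBoundedUnder_of ⟨‖kernelVec a‖, fun k => (hnorm _).le⟩)

theorem kernelVec_mem_approxRangeSubmodule (hlam : ‖lam‖ = 1) (hR : IsDilation lam R)
    (hΦ : IsCoToeplitz φ Φ) (hT : T = R ∘L Φ) {nk : ℕ → ℕ} {b : ℂ} (hb : ‖b‖ < 1)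
    (hΩ : Tendsto (fun k => ‖omegaProd φ lam (nk k) b‖) atTop atTop) :
    kernelVec b ∈ approxRangeSubmodule (fun k => T ^ nk k) atTop := by
  have hlam0 : conj lam ≠ 0 := by simpa using ne_zero_of_norm_ne_zero (hlam.trans_ne one_ne_zero)
  have hnorm : ∀ n, ‖(conj lam)⁻¹ ^ n * b‖ = ‖b‖ := by simp [hlam]
  refine mem_approxRangeSubmodule_of_eq_smul (c := fun k => conj (omegaProd φ lam (nk k) b))
    (v := fun k => kernelVec ((conj lam)⁻¹ ^ nk k * b)) (fun k => ?_) (by simpa using hΩ)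
    (isBoundedUnder_of ⟨‖kernelVec b‖, fun k => (norm_kernelVec_eq (hnorm _) (hnorm _ ▸ hb)).le⟩)
  rw [pow_apply_kernelVec hlam.le hR hΦ hT _ (hnorm _ ▸ hb), psiProd_inv_pow_mul φ
    (by simpa using hlam0), ← mul_assoc, ← mul_pow, mul_inv_cancel₀ hlam0, one_pow, one_mul]

end Operator

theorem stmt8_general (lam : ℂ) (hlam : IsIrrationalRotation lam)
    (φ : ℂ → ℂ)
    (R Φ T : H2 →L[ℂ] H2) (hR : IsDilation lam R) (hΦ : IsCoToeplitz φ Φ)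
    (hT : T = R ∘L Φ)
    (nk : ℕ → ℕ)
    (hC0 : ∃ p ∈ ball (0:ℂ) 1, AccPt p (Filter.principal
      {z : ℂ | z ∈ ball (0:ℂ) 1 ∧ Tendsto (fun k => psiProd φ lam (nk k) z) atTop (𝓝 0)}))
    (hC1 : ∃ p ∈ ball (0:ℂ) 1, AccPt p (Filter.principal
      {z : ℂ | z ∈ ball (0:ℂ) 1 ∧
        Tendsto (fun k => ‖omegaProd φ lam (nk k) z‖) atTop atTop})) :
    Hypercyclic T := by
  obtain ⟨p₀, hp₀, hacc₀⟩ := hC0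
  obtain ⟨p₁, hp₁, hacc₁⟩ := hC1
  refine SatisfiesHCCriterion.hypercyclic (nk := nk) (.of_dense ?_ ?_)
  · refine (dense_span_kernelVec (fun z hz => hz.1) hp₀ hacc₀).mono (Submodule.span_le.mpr ?_)
    rintro _ ⟨a, ⟨ha, hΨ⟩, rfl⟩
    exact kernelVec_mem_tendstoZeroSubmodule hlam.1 hR hΦ hT (mem_ball_zero_iff.mp ha) hΨ
  · refine (dense_span_kernelVec (fun z hz => hz.1) hp₁ hacc₁).mono (Submodule.span_le.mpr ?_)
    rintro _ ⟨b, ⟨hb, hΩ⟩, rfl⟩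
    exact kernelVec_mem_approxRangeSubmodule hlam.1 hR hΦ hT (mem_ball_zero_iff.mp hb) hΩ

theorem stmt8 (lam : ℂ) (hlam : IsIrrationalRotation lam)
    (φ : ℂ → ℂ) (hφ : InHinf φ)
    (R Φ T : H2 →L[ℂ] H2) (hR : IsDilation lam R) (hΦ : IsCoToeplitz φ Φ)
    (hT : T = R ∘L Φ)
    (nk : ℕ → ℕ) (hnk : ∀ k, 0 < nk k)
    (hC0 : ∃ p ∈ ball (0:ℂ) 1, AccPt p (Filter.principal
      {z : ℂ | z ∈ ball (0:ℂ) 1 ∧ Tendsto (fun k => psiProd φ lam (nk k) z) atTop (𝓝 0)}))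
    (hC1 : ∃ p ∈ ball (0:ℂ) 1, AccPt p (Filter.principal
      {z : ℂ | z ∈ ball (0:ℂ) 1 ∧
        Tendsto (fun k => ‖omegaProd φ lam (nk k) z‖) atTop atTop})) :
    Hypercyclic T :=
  stmt8_general lam hlam φ R Φ T hR hΦ hT nk hC0 hC1
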